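/- arXiv:math/0612049 — 3 statements merged into one kernel-verified Lean document; each statement's English description precedes it below -/
import Mathlib

section
/- Let L : ℂⁿ → ℂⁿ be a linear mapping and let M > 1 be a positive integer. Then L has a periodic point of exact period M if and only if L has eigenvalues λ₁, …, λ_s (s ≤ n) that are primitive m₁-th, …, m_s-th roots of unity, respectively, such that M = lcm(m₁, …, m_s). -/
open Metric Set Filter Topology Polynomial Asymptotics
open scoped Classical

noncomputable section

namespace ZhangPaper

/-- `ℂⁿ`. -/
abbrev Cn (n : ℕ) := Fin n → ℂ

variable {n : ℕ}

/-- A germ in `𝒪(ℂⁿ,0,0)`: holomorphic near `0` and fixing the origin. -/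
def IsGerm (f : Cn n → Cn n) : Prop := AnalyticAt ℂ f 0 ∧ f 0 = 0

/-- `q` is a regular value of `h` on `s`. -/
def IsRegularValueOn (h : Cn n → Cn n) (s : Set (Cn n)) (q : Cn n) : Prop :=
  ∀ x ∈ s, h x = q → Function.Bijective (fderiv ℂ h x)

/-- `m` is the zero order (multiplicity) of `h` at the isolated zero `p`:
the number of solutions of `h x = q` near `p`, for any regular value `q`
with `‖q‖` sufficiently small. -/
def HasZeroOrder (h : Cn n → Cn n) (p : Cn n) (m : ℕ) : Prop :=
  ∃ r > 0, AnalyticOnNhd ℂ h (closedBall p r) ∧ h p = 0 ∧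
    (∀ x ∈ closedBall p r, h x = 0 → x = p) ∧
    (∀ ε > 0, ∃ q : Cn n, ‖q‖ < ε ∧ IsRegularValueOn h (ball p r) q) ∧
    ∃ δ > 0, ∀ q : Cn n, ‖q‖ < δ → IsRegularValueOn h (ball p r) q →
      {x ∈ ball p r | h x = q}.ncard = m

/-- The zero order `π_h(p)` of `h` at `p`. -/
def zeroOrder (h : Cn n → Cn n) (p : Cn n) : ℕ := sInf {m | HasZeroOrder h p m}

/-- The fixed point index `μ_g(p)` of `g` at `p`. -/
def fixedPointIndex (g : Cn n → Cn n) (p : Cn n) : ℕ :=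
  zeroOrder (fun x => x - g x) p

/-- The local Dold index `P_M(f,0)`. -/
def doldIndex (f : Cn n → Cn n) (M : ℕ) : ℤ :=
  ∑ τ ∈ M.primeFactors.powerset,
    (-1 : ℤ) ^ τ.card * (fixedPointIndex (f^[M / (∏ p ∈ τ, p)]) 0 : ℤ)

/-- `x` is a periodic point of exact period `M` for `g`. -/
def ExactPeriodicPt (g : Cn n → Cn n) (M : ℕ) (x : Cn n) : Prop :=
  g^[M] x = x ∧ ∀ j, 0 < j → j < M → g^[j] x ≠ x

/-- `g` has at least `m` distinct periodic orbits of period `M` inside `B`. -/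
def AtLeastOrbits (g : Cn n → Cn n) (M m : ℕ) (B : Set (Cn n)) : Prop :=
  ∃ p : Fin m → Cn n,
    (∀ i, ExactPeriodicPt g M (p i) ∧ ∀ j < M, g^[j] (p i) ∈ B) ∧
    ∀ i j : Fin m, i ≠ j → ∀ l < M, g^[l] (p i) ≠ p j

/-- `g` has exactly `m` distinct periodic orbits of period `M` inside `B`. -/
def ExactlyOrbits (g : Cn n → Cn n) (M m : ℕ) (B : Set (Cn n)) : Prop :=
  AtLeastOrbits g M m B ∧ ¬ AtLeastOrbits g M (m + 1) B

/-- The number `𝒪_M(f,0)` of periodic orbits of period `M` of `f` hidden at the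
fixed point `0`: the largest `m` such that there is a ball `B` centered at `0` in which
`0` is the only fixed point of `f^M`, and a sequence of holomorphic maps fixing `0`
converging to `f` uniformly on `B`, each having `m` distinct periodic orbits of
period `M` in `B`. -/
def hiddenOrbits (f : Cn n → Cn n) (M : ℕ) : ℕ :=
  sSup {m | ∃ r > 0,
    (∀ x ∈ closedBall (0 : Cn n) r, f^[M] x = x → x = 0) ∧
    ∃ fk : ℕ → Cn n → Cn n,
      (∀ k, AnalyticOnNhd ℂ (fk k) (ball (0 : Cn n) r) ∧ fk k 0 = 0) ∧
      TendstoUniformlyOn fk f atTop (ball (0 : Cn n) r) ∧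
      ∀ k, AtLeastOrbits (fk k) M m (ball (0 : Cn n) r)}

/-- `0` is an isolated fixed point of `g`. -/
def IsolatedFixedPtAt0 (g : Cn n → Cn n) : Prop :=
  g 0 = 0 ∧ ∀ᶠ x in 𝓝[≠] (0 : Cn n), g x ≠ x

/-- `0` is an isolated zero of `h`. -/
def IsolatedZeroAt0 (h : Cn n → Cn n) : Prop :=
  h 0 = 0 ∧ ∀ᶠ x in 𝓝[≠] (0 : Cn n), h x ≠ 0

/-- `p` is a simple fixed point of `g`: `Dg(p)` has no eigenvalue `1`. -/
def SimpleFixedPt (g : Cn n → Cn n) (p : Cn n) : Prop :=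
  g p = p ∧ ¬ Module.End.HasEigenvalue ((fderiv ℂ g p).toLinearMap) 1

/-- The global fixed point index `L(g)` of `g` over `U`: the sum of the fixed point
indices at all fixed points of `g` in `U`. -/
def globalIndex (g : Cn n → Cn n) (U : Set (Cn n)) : ℤ :=
  ∑ᶠ p ∈ {x ∈ U | g x = x}, (fixedPointIndex g p : ℤ)

/-- The global Dold index `P_M(f)` over `U`. -/
def globalDold (f : Cn n → Cn n) (M : ℕ) (U : Set (Cn n)) : ℤ :=
  ∑ τ ∈ M.primeFactors.powerset,
    (-1 : ℤ) ^ τ.card * globalIndex (f^[M / (∏ p ∈ τ, p)]) U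

private lemma pow_eig (L : Cn n →ₗ[ℂ] Cn n) {lam : ℂ} {v : Cn n} (h : L v = lam • v) (j : ℕ) :
    (L ^ j) v = lam ^ j • v := by
  induction j with
  | zero => simp
  | succ j ih =>
      rw [pow_succ, Module.End.mul_apply, h, map_smul, ih, smul_smul, ← pow_succ']

private lemma eig_linearIndependent (L : Cn n →ₗ[ℂ] Cn n) (T : Finset ℂ) (u : ℂ → Cn n)
    (hu : ∀ lam ∈ T, L (u lam) = lam • u lam ∧ u lam ≠ 0) :
    LinearIndependent ℂ (fun lam : T => u lam) :=
  Module.End.eigenvectors_linearIndependent' L (fun lam : T => (lam : ℂ))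
    Subtype.coe_injective _
    (fun lam => ⟨Module.End.mem_eigenspace_iff.2 (hu lam lam.2).1, (hu lam lam.2).2⟩)

private lemma key_iff (L : Cn n →ₗ[ℂ] Cn n) (T : Finset ℂ) (u : ℂ → Cn n)
    (hu : ∀ lam ∈ T, L (u lam) = lam • u lam ∧ u lam ≠ 0) (j : ℕ) :
    (L ^ j) (∑ lam ∈ T, u lam) = ∑ lam ∈ T, u lam ↔ ∀ lam ∈ T, lam ^ j = 1 := by
  have hLj : (L ^ j) (∑ lam ∈ T, u lam) = ∑ lam ∈ T, lam ^ j • u lam := by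
    rw [map_sum]
    exact Finset.sum_congr rfl fun lam hl => pow_eig L (hu lam hl).1 j
  constructor
  · intro hfix lam hlam
    have hzero : ∑ lam ∈ T, ((lam : ℂ) ^ j - 1) • u lam = 0 := by
      have : ∑ lam ∈ T, lam ^ j • u lam - ∑ lam ∈ T, u lam = 0 := by
        rw [← hLj, hfix, sub_self]
      simpa [sub_smul, Finset.sum_sub_distrib] using this
    have hzero' : ∑ lam : T, ((lam : ℂ) ^ j - 1) • u lam = 0 := by
      rw [Finset.sum_coe_sort T (fun lam => ((lam : ℂ) ^ j - 1) • u lam)]; exact hzero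
    have := linearIndependent_iff'.1 (eig_linearIndependent L T u hu) Finset.univ
      (fun lam : T => (lam : ℂ) ^ j - 1) hzero' ⟨lam, hlam⟩ (Finset.mem_univ _)
    exact sub_eq_zero.1 this
  · intro hone
    rw [hLj]
    exact Finset.sum_congr rfl fun lam hl => by rw [hone lam hl, one_smul]

private lemma decomp (L : Cn n →ₗ[ℂ] Cn n) {M : ℕ} (hM : 0 < M) {x : Cn n}
    (hx : (L ^ M) x = x) :
    ∃ T : Finset ℂ, ∃ u : ℂ → Cn n,
      (∀ lam ∈ T, (L (u lam) = lam • u lam ∧ u lam ≠ 0) ∧ lam ^ M = 1) ∧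
      x = ∑ lam ∈ T, u lam := by
  set ζ : ℂ := Complex.exp (2 * Real.pi * Complex.I / M) with hζdef
  have hζ : IsPrimitiveRoot ζ M := Complex.isPrimitiveRoot_exp M hM.ne'
  have hMC : (M : ℂ) ≠ 0 := Nat.cast_ne_zero.2 hM.ne'
  set w : ℂ → Cn n := fun lam => (M : ℂ)⁻¹ • ∑ j ∈ Finset.range M, lam⁻¹ ^ j • (L ^ j) x
    with hwdef
  -- eigenvector property
  have heig : ∀ lam : ℂ, lam ^ M = 1 → L (w lam) = lam • w lam := by
    intro lam h1
    have hlam0 : lam ≠ 0 := by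
      intro h; rw [h] at h1; simp [zero_pow hM.ne'] at h1
    set a : ℕ → Cn n := fun j => (lam * lam⁻¹ ^ j) • (L ^ j) x with hadef
    have haM : a M = a 0 := by
      simp [hadef, hx, h1]
    have hshift : ∑ j ∈ Finset.range M, a (j + 1) = ∑ j ∈ Finset.range M, a j := by
      have h1' := Finset.sum_range_succ' a M
      have h2' := Finset.sum_range_succ a M
      rw [h2'] at h1'
      -- h1' : ∑ range M a + a M = ∑ range M (a (·+1)) + a 0
      rw [haM] at h1'
      exact (add_right_cancel h1').symm
    have hterm : ∀ j, lam⁻¹ ^ j • L ((L ^ j) x) = a (j + 1) := by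
      intro j
      show lam⁻¹ ^ j • L ((L ^ j) x) = (lam * lam⁻¹ ^ (j + 1)) • (L ^ (j + 1)) x
      rw [show (L ^ (j + 1)) x = L ((L ^ j) x) from by rw [pow_succ', Module.End.mul_apply],
        show lam⁻¹ ^ (j + 1) = lam⁻¹ * lam⁻¹ ^ j from pow_succ' _ _,
        ← mul_assoc, mul_inv_cancel₀ hlam0, one_mul]
    calc L (w lam) = (M : ℂ)⁻¹ • ∑ j ∈ Finset.range M, lam⁻¹ ^ j • L ((L ^ j) x) := by
          rw [hwdef]; simp [map_sum, map_smul]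
      _ = (M : ℂ)⁻¹ • ∑ j ∈ Finset.range M, a (j + 1) := by
          rw [Finset.sum_congr rfl fun j _ => hterm j]
      _ = (M : ℂ)⁻¹ • ∑ j ∈ Finset.range M, a j := by rw [hshift]
      _ = lam • w lam := by
          rw [hwdef, smul_comm]
          congr 1
          rw [Finset.smul_sum]
          exact Finset.sum_congr rfl fun j _ => by rw [hadef, smul_smul]
  -- the sum of the w's over all M-th roots of unity is x
  have hsum : ∑ k ∈ Finset.range M, w (ζ ^ k) = x := by
    have hswap : ∑ k ∈ Finset.range M, w (ζ ^ k)
        = (M : ℂ)⁻¹ • ∑ j ∈ Finset.range M,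
            (∑ k ∈ Finset.range M, ((ζ⁻¹ ^ j) ^ k)) • (L ^ j) x := by
      simp only [hwdef, ← Finset.smul_sum]
      congr 1
      rw [Finset.sum_comm]
      refine Finset.sum_congr rfl fun j _ => ?_
      rw [Finset.sum_smul]
      refine Finset.sum_congr rfl fun k _ => ?_
      congr 1
      rw [← inv_pow, ← pow_mul, mul_comm k j, pow_mul]
    have hgeom : ∀ j ∈ Finset.range M, j ≠ 0 →
        (∑ k ∈ Finset.range M, ((ζ⁻¹ ^ j) ^ k)) • (L ^ j) x = 0 := by
      intro j hj hj0
      have hne1 : ζ⁻¹ ^ j ≠ 1 := by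
        intro h
        rw [inv_pow, inv_eq_one] at h
        have hdvd := (hζ.pow_eq_one_iff_dvd j).1 h
        have hle := Nat.le_of_dvd (Nat.pos_of_ne_zero hj0) hdvd
        have hjM := Finset.mem_range.1 hj
        omega
      have hpowM : (ζ⁻¹ ^ j) ^ M = 1 := by
        rw [← pow_mul, mul_comm j M, pow_mul, inv_pow, hζ.pow_eq_one, inv_one, one_pow]
      rw [geom_sum_eq hne1, hpowM, sub_self, zero_div, zero_smul]
    rw [hswap, Finset.sum_eq_single 0 (fun j hj hj0 => hgeom j hj hj0)
      (fun h => absurd (Finset.mem_range.2 hM) h)]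
    simp [hMC]
  -- now define T
  refine ⟨(((Finset.range M).image fun k => ζ ^ k).filter fun lam => w lam ≠ 0), w,
    ?_, ?_⟩
  · intro lam hlam
    rw [Finset.mem_filter, Finset.mem_image] at hlam
    obtain ⟨⟨k, _, rfl⟩, hne⟩ := hlam
    have h1 : (ζ ^ k) ^ M = 1 := by
      rw [← pow_mul, mul_comm k M, pow_mul, hζ.pow_eq_one, one_pow]
    exact ⟨⟨heig _ h1, hne⟩, h1⟩
  · have himg : ∑ lam ∈ (Finset.range M).image (fun k => ζ ^ k), w lam
        = ∑ k ∈ Finset.range M, w (ζ ^ k) := by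
      refine Finset.sum_image fun k hk l hl h => ?_
      exact hζ.pow_inj (Finset.mem_range.1 hk) (Finset.mem_range.1 hl) h
    rw [Finset.sum_filter_ne_zero, himg, hsum]

/-- A linear map `L : ℂⁿ → ℂⁿ` has a periodic point of exact period `M > 1` iff it has
eigenvalues `λ₁, …, λ_s` (`s ≤ n`) that are primitive `m₁`-th, …, `m_s`-th roots of
unity with `M = lcm(m₁, …, m_s)`. -/
theorem linear_map_periodic_point_iff {n : ℕ} (M : ℕ) (hM : 1 < M)
    (L : Cn n →ₗ[ℂ] Cn n) :
    (∃ x : Cn n, ExactPeriodicPt (⇑L) M x) ↔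
      ∃ (s : ℕ) (m : Fin s → ℕ) (lam : Fin s → ℂ),
        0 < s ∧ s ≤ n ∧
        (∀ i, Module.End.HasEigenvalue L (lam i) ∧ IsPrimitiveRoot (lam i) (m i)) ∧
        M = Finset.univ.lcm m := by
  have hM0 : 0 < M := by omega
  constructor
  · rintro ⟨x, hxM, hxlt⟩
    have hxM' : (L ^ M) x = x := by rw [Module.End.pow_apply]; exact hxM
    obtain ⟨T, u, hTu, hxsum⟩ := decomp L hM0 hxM'
    have hu : ∀ lam ∈ T, L (u lam) = lam • u lam ∧ u lam ≠ 0 := fun lam hl => (hTu lam hl).1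
    have key : ∀ j, ((L ^ j) x = x ↔ ∀ lam ∈ T, lam ^ j = 1) := by
      intro j; rw [hxsum]; exact key_iff L T u hu j
    have hTne : T.Nonempty := by
      rcases T.eq_empty_or_nonempty with h | h
      · exfalso
        apply hxlt 1 one_pos hM
        have hx0 : x = 0 := by rw [hxsum, h, Finset.sum_empty]
        simp [hx0]
      · exact h
    -- orders
    have hdvd : ∀ lam ∈ T, ∀ j : ℕ, (lam ^ j = 1 ↔ orderOf lam ∣ j) := by
      intro lam hl j
      exact ⟨fun h => orderOf_dvd_of_pow_eq_one h, fun h => orderOf_dvd_iff_pow_eq_one.1 h⟩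
    set d : ℕ := T.lcm orderOf with hddef
    have hiff : ∀ j, ((L ^ j) x = x ↔ d ∣ j) := by
      intro j
      rw [key j]
      constructor
      · intro h
        exact Finset.lcm_dvd fun lam hl => (hdvd lam hl j).1 (h lam hl)
      · intro h lam hl
        exact (hdvd lam hl j).2 (dvd_trans (Finset.dvd_lcm hl) h)
    have hdM : d ∣ M := (hiff M).1 hxM'
    have hd0 : d ≠ 0 := by
      intro h; rw [h] at hdM; exact absurd (zero_dvd_iff.1 hdM) hM0.ne'
    have hdMeq : d = M := by
      by_contra hne
      have hdlt : d < M := lt_of_le_of_ne (Nat.le_of_dvd hM0 hdM) hne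
      apply hxlt d (Nat.pos_of_ne_zero hd0) hdlt
      rw [← Module.End.pow_apply]
      exact (hiff d).2 dvd_rfl
    -- build the data
    set e : Fin T.card ≃ ↥T := T.equivFin.symm with hedef
    refine ⟨T.card, fun i => orderOf ((e i : ℂ)), fun i => (e i : ℂ), ?_, ?_, ?_, ?_⟩
    · exact Finset.card_pos.2 hTne
    · have hind := eig_linearIndependent L T u hu
      have := hind.fintype_card_le_finrank
      rwa [Fintype.card_coe, Module.finrank_fin_fun] at this
    · intro i
      refine ⟨Module.End.hasEigenvalue_of_hasEigenvector
        ⟨Module.End.mem_eigenspace_iff.2 (hu _ (e i).2).1, (hu _ (e i).2).2⟩, ?_⟩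
      exact IsPrimitiveRoot.orderOf _
    · rw [← hdMeq, hddef]
      refine Nat.dvd_antisymm ?_ ?_
      · refine Finset.lcm_dvd fun lam hl => ?_
        have : lam = ((e (e.symm ⟨lam, hl⟩) : ℂ)) := by rw [Equiv.apply_symm_apply]
        rw [this]
        exact Finset.dvd_lcm (Finset.mem_univ _)
      · exact Finset.lcm_dvd fun i _ => Finset.dvd_lcm (e i).2
  · rintro ⟨s, m, lam, hs, hsn, h, hMeq⟩
    set u : ℂ → Cn n := fun μ =>
      if h : Module.End.HasEigenvalue L μ then h.exists_hasEigenvector.choose else 0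
      with hudef
    set T : Finset ℂ := Finset.image lam Finset.univ with hTdef
    have hu : ∀ μ ∈ T, L (u μ) = μ • u μ ∧ u μ ≠ 0 := by
      intro μ hμ
      rw [hTdef, Finset.mem_image] at hμ
      obtain ⟨i, -, rfl⟩ := hμ
      have hev := (h i).1
      have hspec := hev.exists_hasEigenvector.choose_spec
      rw [hudef]
      simp only [dif_pos hev]
      exact ⟨Module.End.mem_eigenspace_iff.1 hspec.1, hspec.2⟩
    set x : Cn n := ∑ μ ∈ T, u μ with hxdef
    have key : ∀ j, ((L ^ j) x = x ↔ ∀ μ ∈ T, μ ^ j = 1) := fun j => key_iff L T u hu j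
    refine ⟨x, ?_, ?_⟩
    · rw [← Module.End.pow_apply]
      refine (key M).2 fun μ hμ => ?_
      rw [hTdef, Finset.mem_image] at hμ
      obtain ⟨i, -, rfl⟩ := hμ
      refine ((h i).2.pow_eq_one_iff_dvd M).2 ?_
      rw [hMeq]
      exact Finset.dvd_lcm (Finset.mem_univ i)
    · intro j hj0 hjM hfix
      rw [← Module.End.pow_apply] at hfix
      have hall := (key j).1 hfix
      have : M ∣ j := by
        rw [hMeq]
        refine Finset.lcm_dvd fun i _ => ?_
        refine ((h i).2.pow_eq_one_iff_dvd j).1 ?_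
        exact hall (lam i) (Finset.mem_image_of_mem lam (Finset.mem_univ i))
      exact absurd (Nat.le_of_dvd hj0 this) (not_le.2 hjM)

end ZhangPaper
end
end

section
/- Let L : ℂ² → ℂ² be a linear mapping and let M > 1 be a positive integer. Then L has a periodic point of exact period M if and only if one of the following holds: (a) one eigenvalue of L is a primitive M-th root of unity; (b) the two eigenvalues of L are primitive m₁-th and m₂-th roots of unity, respectively, with lcm(m₁,m₂) = M. -/
/-! An `M`-periodic point `x` of `L` is either an eigenvector, whose exact period is the order of
its eigenvalue, or a cyclic vector: then `x, L x` is a basis, the exact period of `x` is the order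
of `L`, and in particular `L` has finite order. An endomorphism of finite order is annihilated by
the squarefree polynomial `X ^ M - 1`, hence semisimple, i.e. diagonalisable over `ℂ`, so its order
is the lcm of the orders of its two eigenvalues. Conversely, an eigenvector, or the sum of
eigenvectors for two distinct eigenvalues, is a point of the required exact period. -/

open Metric Set Filter Topology Polynomial Asymptotics
open scoped Classical

noncomputable section

open Function

namespace Module.End

variable {K V : Type*} [Field K] [AddCommGroup V] [Module K V] {f : End K V}

lemma HasEigenvector.pow_apply_eq_self_iff {μ : K} {v : V} (hv : f.HasEigenvector μ v) (j : ℕ) :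
    (f ^ j) v = v ↔ μ ^ j = 1 := by
  rw [hv.pow_apply]
  refine ⟨fun h => smul_left_injective K hv.2 (h.trans (one_smul K v).symm), fun h => ?_⟩
  rw [h, one_smul]

lemma HasEigenvector.minimalPeriod_eq_orderOf {μ : K} {v : V} (hv : f.HasEigenvector μ v) :
    minimalPeriod f v = orderOf μ := by
  refine Nat.dvd_right_iff_eq.mp fun j => ?_
  rw [← isPeriodicPt_iff_minimalPeriod_dvd, orderOf_dvd_iff_pow_eq_one, ← hv.pow_apply_eq_self_iff,
    IsPeriodicPt, IsFixedPt, Module.End.pow_apply]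

lemma minimalPeriod_add_eq_lcm {μ₁ μ₂ : K} {v₁ v₂ : V} (hμ : μ₁ ≠ μ₂)
    (h₁ : f.HasEigenvector μ₁ v₁) (h₂ : f.HasEigenvector μ₂ v₂) :
    minimalPeriod f (v₁ + v₂) = Nat.lcm (orderOf μ₁) (orderOf μ₂) := by
  have hind : LinearIndependent K ![v₁, v₂] :=
    f.eigenvectors_linearIndependent' ![μ₁, μ₂]
      (by simp [hμ]) _ (Fin.forall_fin_two.mpr ⟨h₁, h₂⟩)
  refine Nat.dvd_right_iff_eq.mp fun j => ?_
  rw [← isPeriodicPt_iff_minimalPeriod_dvd, Nat.lcm_dvd_iff, orderOf_dvd_iff_pow_eq_one,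
    orderOf_dvd_iff_pow_eq_one, IsPeriodicPt, IsFixedPt, ← Module.End.pow_apply, map_add,
    h₁.pow_apply, h₂.pow_apply]
  constructor
  · intro h
    exact hind.eq_of_pair (by simpa using h)
  · rintro ⟨h₁, h₂⟩
    simp [h₁, h₂]

lemma span_pair_eq_top_of_forall_ne_smul [FiniteDimensional K V] (hV : finrank K V = 2) {x : V}
    (hx : ∀ c : K, f x ≠ c • x) : Submodule.span K {x, f x} = ⊤ := by
  have hx0 : x ≠ 0 := by
    rintro rfl
    exact hx 0 (by simp)
  have hind : LinearIndependent K ![x, f x] :=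
    (LinearIndependent.pair_iff' hx0).mpr fun c h => hx c h.symm
  rw [← Matrix.range_cons_cons_empty x (f x) ![]]
  exact hind.span_eq_top_of_card_eq_finrank' (by simp [hV])

lemma minimalPeriod_eq_orderOf_of_span_eq_top {x : V} (hx : Submodule.span K {x, f x} = ⊤) :
    minimalPeriod f x = orderOf f := by
  refine Nat.dvd_right_iff_eq.mp fun j => ?_
  rw [← isPeriodicPt_iff_minimalPeriod_dvd, orderOf_dvd_iff_pow_eq_one, IsPeriodicPt, IsFixedPt,
    ← Module.End.pow_apply]
  refine ⟨fun h => LinearMap.ext_on hx ?_, fun h => by rw [h, one_apply]⟩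
  rintro y (rfl | rfl)
  · exact h
  · rw [← mul_apply, ← pow_succ, pow_succ', mul_apply, h]
    rfl

lemma isSemisimple_of_isOfFinOrder [CharZero K] (hf : IsOfFinOrder f) : f.IsSemisimple := by
  obtain ⟨M, hM, hfM⟩ := hf.exists_pow_eq_one
  refine isSemisimple_of_squarefree_aeval_eq_zero
    (separable_X_pow_sub_C 1 (Nat.cast_ne_zero.mpr hM.ne') one_ne_zero).squarefree ?_
  simp [hfM]

lemma IsSemisimple.pow_eq_one_iff [IsAlgClosed K] [FiniteDimensional K V] (hf : f.IsSemisimple)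
    (j : ℕ) : f ^ j = 1 ↔ ∀ μ, f.HasEigenvalue μ → μ ^ j = 1 := by
  refine ⟨fun h μ hμ => ?_, fun h => ?_⟩
  · obtain ⟨v, hv⟩ := hμ.exists_hasEigenvector
    rw [← hv.pow_apply_eq_self_iff, h, one_apply]
  · have hle : ⨆ μ, f.eigenspace μ ≤ LinearMap.eqLocus (f ^ j) 1 := by
      refine iSup_le fun μ v hv => ?_
      rcases eq_or_ne v 0 with rfl | hv0
      · simp
      · have hev : f.HasEigenvector μ v := ⟨hv, hv0⟩
        exact (hev.pow_apply_eq_self_iff j).mpr (h μ (hasEigenvalue_of_hasEigenvector hev))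
    rw [hf.iSup_eigenspace_eq_top] at hle
    exact LinearMap.ext fun v => hle Submodule.mem_top

lemma hasEigenvalue_iff_of_charpoly_eq [FiniteDimensional K V] {μ₁ μ₂ : K}
    (h : f.charpoly = (X - C μ₁) * (X - C μ₂)) (μ : K) :
    f.HasEigenvalue μ ↔ μ = μ₁ ∨ μ = μ₂ := by
  simp [hasEigenvalue_iff_isRoot_charpoly, h, sub_eq_zero]

lemma orderOf_eq_lcm_of_charpoly_eq [CharZero K] [IsAlgClosed K] [FiniteDimensional K V]
    {μ₁ μ₂ : K} (hf : IsOfFinOrder f) (h : f.charpoly = (X - C μ₁) * (X - C μ₂)) :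
    orderOf f = Nat.lcm (orderOf μ₁) (orderOf μ₂) := by
  refine Nat.dvd_right_iff_eq.mp fun j => ?_
  rw [orderOf_dvd_iff_pow_eq_one, (isSemisimple_of_isOfFinOrder hf).pow_eq_one_iff,
    Nat.lcm_dvd_iff, orderOf_dvd_iff_pow_eq_one, orderOf_dvd_iff_pow_eq_one]
  simp [hasEigenvalue_iff_of_charpoly_eq h]

lemma exists_minimalPeriod_eq_lcm_of_charpoly_eq [FiniteDimensional K V] {μ₁ μ₂ : K}
    (h : f.charpoly = (X - C μ₁) * (X - C μ₂)) :
    ∃ x, minimalPeriod f x = Nat.lcm (orderOf μ₁) (orderOf μ₂) := by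
  obtain ⟨v₁, hv₁⟩ := ((hasEigenvalue_iff_of_charpoly_eq h μ₁).mpr (.inl rfl)).exists_hasEigenvector
  obtain ⟨v₂, hv₂⟩ := ((hasEigenvalue_iff_of_charpoly_eq h μ₂).mpr (.inr rfl)).exists_hasEigenvector
  rcases eq_or_ne μ₁ μ₂ with rfl | hμ
  · exact ⟨v₁, by rw [Nat.lcm_self, hv₁.minimalPeriod_eq_orderOf]⟩
  · exact ⟨v₁ + v₂, minimalPeriod_add_eq_lcm hμ hv₁ hv₂⟩

lemma exists_charpoly_eq_mul [IsAlgClosed K] [FiniteDimensional K V] (hV : finrank K V = 2)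
    (f : End K V) : ∃ μ₁ μ₂ : K, f.charpoly = (X - C μ₁) * (X - C μ₂) := by
  have hsplits : f.charpoly.Splits := IsAlgClosed.splits _
  have hcard : f.charpoly.roots.card = 2 := by
    rw [splits_iff_card_roots.mp hsplits, LinearMap.charpoly_natDegree, hV]
  obtain ⟨μ₁, μ₂, hroots⟩ := Multiset.card_eq_two.mp hcard
  refine ⟨μ₁, μ₂, ?_⟩
  rw [hsplits.eq_prod_roots_of_monic f.charpoly_monic, hroots]
  simp

end Module.End

namespace ZhangPaper

open Module.End

lemma exactPeriodicPt_iff_minimalPeriod_eq {n M : ℕ} {g : Cn n → Cn n} {x : Cn n} (hM : 0 < M) :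
    ExactPeriodicPt g M x ↔ minimalPeriod g x = M := by
  refine ⟨fun ⟨hper, hmin⟩ => ?_, ?_⟩
  · by_contra hne
    exact hmin _ (IsPeriodicPt.minimalPeriod_pos hM hper)
      ((IsPeriodicPt.minimalPeriod_le hM hper).lt_of_ne hne)
      (iterate_minimalPeriod (f := g))
  · rintro rfl
    exact ⟨iterate_minimalPeriod, fun j hj hjM h => (IsPeriodicPt.minimalPeriod_le hj h).not_gt hjM⟩

/-- A linear map `L : ℂ² → ℂ²` has a periodic point of exact period `M > 1` iff either
one eigenvalue of `L` is a primitive `M`-th root of unity, or the two eigenvalues of `L`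
are primitive `m₁`-th and `m₂`-th roots of unity with `lcm(m₁, m₂) = M`. -/
theorem linear_map_periodic_point_iff_dim_two (M : ℕ) (hM : 1 < M)
    (L : Cn 2 →ₗ[ℂ] Cn 2) :
    (∃ x : Cn 2, ExactPeriodicPt (⇑L) M x) ↔
      ((∃ lam : ℂ, Module.End.HasEigenvalue L lam ∧ IsPrimitiveRoot lam M) ∨
        ∃ (m₁ m₂ : ℕ) (l₁ l₂ : ℂ),
          LinearMap.charpoly L = (X - C l₁) * (X - C l₂) ∧
          IsPrimitiveRoot l₁ m₁ ∧ IsPrimitiveRoot l₂ m₂ ∧ Nat.lcm m₁ m₂ = M) := by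
  have hM0 : 0 < M := by omega
  have hV : Module.finrank ℂ (Cn 2) = 2 := Module.finrank_fin_fun ℂ
  simp only [exactPeriodicPt_iff_minimalPeriod_eq hM0]
  constructor
  · rintro ⟨x, hx⟩
    by_cases heig : ∃ c : ℂ, L x = c • x
    · obtain ⟨c, hc⟩ := heig
      have hx0 : x ≠ 0 := by
        rintro rfl
        rw [minimalPeriod_eq_one_iff_isFixedPt.mpr (map_zero L)] at hx
        omega
      have hvec : HasEigenvector L c x := ⟨mem_eigenspace_iff.mpr hc, hx0⟩
      exact .inl ⟨c, hasEigenvalue_of_hasEigenvector hvec,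
        IsPrimitiveRoot.iff_orderOf.mpr (hvec.minimalPeriod_eq_orderOf ▸ hx)⟩
    · rw [minimalPeriod_eq_orderOf_of_span_eq_top
        (span_pair_eq_top_of_forall_ne_smul hV (not_exists.mp heig))] at hx
      obtain ⟨l₁, l₂, hchar⟩ := exists_charpoly_eq_mul hV L
      have hfin : IsOfFinOrder L := orderOf_pos_iff.mp (hx ▸ hM0)
      exact .inr ⟨_, _, l₁, l₂, hchar, .orderOf l₁, .orderOf l₂,
        (orderOf_eq_lcm_of_charpoly_eq hfin hchar).symm.trans hx⟩
  · rintro (⟨c, hc, hprim⟩ | ⟨m₁, m₂, l₁, l₂, hchar, h₁, h₂, rfl⟩)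
    · obtain ⟨v, hv⟩ := hc.exists_hasEigenvector
      exact ⟨v, hv.minimalPeriod_eq_orderOf.trans hprim.eq_orderOf.symm⟩
    · rw [h₁.eq_orderOf, h₂.eq_orderOf]
      exact exists_minimalPeriod_eq_lcm_of_charpoly_eq hchar

end ZhangPaper
end
end

section
/- Let r be a positive integer and let g = (g₁,g₂) ∈ 𝒪(ℂ²,0,0) with Dg(0) = diag(λ₁,λ₂) such that, for j = 1, 2 and all pairs (i₁,i₂) of nonnegative integers with 2 ≤ i₁ + i₂ ≤ r, the coefficient of x₁^{i₁}x₂^{i₂} in the power series of g_j is nonzero only if λ_j = λ₁^{i₁}λ₂^{i₂}. Then for every positive integer k, the k-th iterate g^k = (g₁^{(k)}, g₂^{(k)}) has the same property: for j = 1, 2 its power series is λ_j^k x_j plus terms of degree ≥ 2, and for all (i₁,i₂) with 2 ≤ i₁ + i₂ ≤ r the coefficient of x₁^{i₁}x₂^{i₂} in g_j^{(k)} is nonzero only if λ_j = λ₁^{i₁}λ₂^{i₂}. -/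
open Metric Set Filter Topology Polynomial Asymptotics
open scoped Classical

noncomputable section

namespace ZhangPaper

variable {n : ℕ}

/-- `h : ℂ² → ℂ` has an expansion `lin · x_j` plus resonant terms of degrees `2,…,r`
(the coefficient of `x₁^{i₁} x₂^{i₂}` can be nonzero only if
`target = λ₁^{i₁} λ₂^{i₂}`) plus a remainder `o(|x|^r)`. -/
def ResonantUpTo (l₁ l₂ target lin : ℂ) (j : Fin 2) (h : Cn 2 → ℂ) (r : ℕ) : Prop :=
  ∃ c : ℕ → ℕ → ℂ,
    (∀ i₁ i₂ : ℕ, 2 ≤ i₁ + i₂ → i₁ + i₂ ≤ r → c i₁ i₂ ≠ 0 →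
      target = l₁ ^ i₁ * l₂ ^ i₂) ∧
    (fun x : Cn 2 => h x - lin * x j -
        ∑ i ∈ Finset.range (r + 1) ×ˢ Finset.range (r + 1),
          (if 2 ≤ i.1 + i.2 ∧ i.1 + i.2 ≤ r then c i.1 i.2 * x 0 ^ i.1 * x 1 ^ i.2
            else 0))
      =o[𝓝 (0 : Cn 2)] fun x : Cn 2 => ‖x‖ ^ r

end ZhangPaper

/-!
Write each component of `g` as a polynomial `Q j = λ_j x_j + (terms of degree ≥ 2)` plus
`o(‖x‖^r)`. Giving the variable `x_i` the weight `λ_i` in the additive copy of `(ℂ, *)`, the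
monomial `x₁^{i₁} x₂^{i₂}` has weight `λ₁^{i₁} λ₂^{i₂}`, so the resonance condition says exactly
that `Q j` is weighted homogeneous of weight `λ_j`. Both properties survive composition:
substituting polynomials of the right weights keeps weighted homogeneity, and
`Q j ≡ λ_j x_j` modulo the square of the ideal of the variables becomes `≡ λ_j^k x_j` for the
`k`-fold composite. Since polynomial maps are locally Lipschitz and `g(x) = O(‖x‖)`, this
composite approximates `g^k` up to `o(‖x‖^r)`; its coefficients of degree `2, …, r` are the
required resonant ones.
-/

namespace Asymptotics

theorem isBigO_norm_pow_norm_pow {E : Type*} [SeminormedAddCommGroup E] {m n : ℕ} (h : m ≤ n) :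
    (fun x : E => ‖x‖ ^ n) =O[𝓝 0] fun x => ‖x‖ ^ m := by
  rcases h.eq_or_lt with rfl | h
  · exact isBigO_refl _ _
  · exact (isLittleO_norm_pow_norm_pow h).isBigO

end Asymptotics

namespace MvPolynomial

variable {σ τ R : Type*}

theorem bind₁_mem_pow_idealOfVars [CommSemiring R] {P : σ → MvPolynomial τ R}
    (hP : ∀ i, P i ∈ idealOfVars τ R) {q : MvPolynomial σ R} {n : ℕ}
    (hq : q ∈ idealOfVars σ R ^ n) : bind₁ P q ∈ idealOfVars τ R ^ n := by
  have hmap : (idealOfVars σ R).map (bind₁ P) ≤ idealOfVars τ R := by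
    rw [Ideal.map_span, Ideal.span_le, ← Set.range_comp]
    rintro _ ⟨i, rfl⟩
    simpa using hP i
  have := Ideal.mem_map_of_mem (bind₁ P : MvPolynomial σ R →+* MvPolynomial τ R) hq
  rw [Ideal.map_pow] at this
  exact Ideal.pow_right_mono hmap n this

theorem mem_idealOfVars_of_sub_C_mul_X_mem [CommRing R] {p : MvPolynomial σ R} {a : R} {i : σ}
    {n : ℕ} (hn : n ≠ 0) (h : p - C a * X i ∈ idealOfVars σ R ^ n) : p ∈ idealOfVars σ R := by
  simpa using Ideal.add_mem _ (Ideal.pow_le_self hn h)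
    (Ideal.mul_mem_left _ (C a) (Ideal.subset_span ⟨i, rfl⟩))

theorem iterate_bind₁_X_sub_mem_pow_idealOfVars [CommRing R] {l : σ → R}
    {Q : σ → MvPolynomial σ R} (hQ : ∀ i, Q i - C (l i) * X i ∈ idealOfVars σ R ^ 2)
    (k : ℕ) (i : σ) : (bind₁ Q)^[k] (X i) - C (l i ^ k) * X i ∈ idealOfVars σ R ^ 2 := by
  have hQ₁ i : Q i ∈ idealOfVars σ R := mem_idealOfVars_of_sub_C_mul_X_mem two_ne_zero (hQ i)
  induction k with
  | zero => simp
  | succ k ih =>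
    have key : (bind₁ Q)^[k + 1] (X i) - C (l i ^ (k + 1)) * X i =
        bind₁ Q ((bind₁ Q)^[k] (X i) - C (l i ^ k) * X i) +
          C (l i ^ k) * (Q i - C (l i) * X i) := by
      simp only [Function.iterate_succ_apply', map_sub, map_mul, bind₁_C_right, bind₁_X_right,
        pow_succ]
      ring
    rw [key]
    exact Ideal.add_mem _ (bind₁_mem_pow_idealOfVars hQ₁ ih) (Ideal.mul_mem_left _ _ (hQ i))

section WeightedHomogeneous

variable [CommSemiring R] {M : Type*} [AddCommMonoid M]

theorem IsWeightedHomogeneous.bind₁ {w : σ → M} {w' : τ → M} {q : MvPolynomial σ R} {m : M}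
    (hq : IsWeightedHomogeneous w q m) {P : σ → MvPolynomial τ R}
    (hP : ∀ i, IsWeightedHomogeneous w' (P i) (w i)) :
    IsWeightedHomogeneous w' (bind₁ P q) m := by
  rw [q.as_sum, map_sum]
  refine IsWeightedHomogeneous.sum _ _ _ fun d hd => ?_
  rw [bind₁_monomial, ← hq (mem_support_iff.mp hd), Finsupp.weight_apply, Finsupp.sum]
  exact (IsWeightedHomogeneous.prod _ _ _ fun i _ => (hP i).pow (d i)).C_mul _

theorem IsWeightedHomogeneous.iterate_bind₁ {w : σ → M} {Q : σ → MvPolynomial σ R}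
    (hQ : ∀ i, IsWeightedHomogeneous w (Q i) (w i)) {p : MvPolynomial σ R} {m : M}
    (hp : IsWeightedHomogeneous w p m) (k : ℕ) :
    IsWeightedHomogeneous w ((MvPolynomial.bind₁ Q)^[k] p) m := by
  induction k with
  | zero => exact hp
  | succ k ih => simpa only [Function.iterate_succ_apply'] using ih.bind₁ hQ

end WeightedHomogeneous

section Asymptotics

open Asymptotics

variable {𝕜 : Type*} [Fintype σ] [Fintype τ]

theorem isBigO_eval_of_mem_pow_idealOfVars [NormedField 𝕜] {p : MvPolynomial σ 𝕜} {n : ℕ}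
    (hp : p ∈ idealOfVars σ 𝕜 ^ n) :
    (fun x : σ → 𝕜 => eval x p) =O[𝓝 0] fun x => ‖x‖ ^ n := by
  rw [mem_pow_idealOfVars_iff] at hp
  simp_rw [eval_eq']
  refine IsBigO.fun_sum fun d hd => IsBigO.const_mul_left ?_ _
  refine IsBigO.trans (IsBigO.of_norm_le fun x => ?_) (isBigO_norm_pow_norm_pow (hp d hd))
  calc ‖∏ i, x i ^ d i‖ = ∏ i, ‖x i‖ ^ d i := by simp [norm_prod, norm_pow]
    _ ≤ ∏ i, ‖x‖ ^ d i := by gcongr with i; exact norm_le_pi_norm x i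
    _ = ‖x‖ ^ d.degree := by rw [Finset.prod_pow_eq_pow_sum, Finsupp.degree_eq_sum]

variable [NontriviallyNormedField 𝕜] [CompleteSpace 𝕜]

theorem isLittleO_comp_sub_eval_bind₁ {r : ℕ} (hr : 0 < r) {f : (σ → 𝕜) → 𝕜}
    {q : MvPolynomial σ 𝕜} (hf : (fun y => f y - eval y q) =o[𝓝 0] fun y => ‖y‖ ^ r)
    {u : (τ → 𝕜) → σ → 𝕜} {P : σ → MvPolynomial τ 𝕜} (hP : ∀ i, P i ∈ idealOfVars τ 𝕜)
    (hu : ∀ i, (fun x => u x i - eval x (P i)) =o[𝓝 0] fun x => ‖x‖ ^ r) :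
    (fun x => f (u x) - eval x (bind₁ P q)) =o[𝓝 0] fun x => ‖x‖ ^ r := by
  set U : (τ → 𝕜) → σ → 𝕜 := fun x i => eval x (P i)
  have hU : U =O[𝓝 0] fun x => ‖x‖ := isBigO_pi.2 fun i => by
    simpa using isBigO_eval_of_mem_pow_idealOfVars (n := 1) (by simpa using hP i)
  have huU : (fun x => u x - U x) =o[𝓝 0] fun x => ‖x‖ ^ r := isLittleO_pi.2 hu
  have hu_lin : u =O[𝓝 0] fun x => ‖x‖ := by
    have hpow : (fun x : τ → 𝕜 => ‖x‖ ^ r) =O[𝓝 0] fun x => ‖x‖ := by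
      simpa using isBigO_norm_pow_norm_pow (E := τ → 𝕜) hr
    simpa using (huU.isBigO.trans hpow).add hU
  have hu0 : Tendsto u (𝓝 0) (𝓝 0) := hu_lin.trans_tendsto tendsto_norm_zero
  have hU0 : Tendsto U (𝓝 0) (𝓝 0) := hU.trans_tendsto tendsto_norm_zero
  have h₁ : (fun x => f (u x) - eval (u x) q) =o[𝓝 0] fun x => ‖x‖ ^ r :=
    (hf.comp_tendsto hu0).trans_isBigO (hu_lin.norm_left.pow r)
  have h₂ : (fun x => eval (u x) q - eval (U x) q) =o[𝓝 0] fun x => ‖x‖ ^ r := by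
    have hlip := ((AnalyticOnNhd.eval_mvPolynomial q) 0 trivial).hasStrictFDerivAt.isBigO_sub
    exact ((hlip.comp_tendsto (hu0.prodMk_nhds hU0)).trans_isLittleO huU :)
  have hbind x : eval x (bind₁ P q) = eval (U x) q := by
    rw [eval, eval₂Hom_bind₁]; rfl
  simpa only [hbind, sub_add_sub_cancel] using h₁.add h₂

theorem isLittleO_iterate_sub_eval_iterate_bind₁ {r : ℕ} (hr : 0 < r)
    {g : (σ → 𝕜) → σ → 𝕜} {Q : σ → MvPolynomial σ 𝕜} (hQ : ∀ i, Q i ∈ idealOfVars σ 𝕜)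
    (hg : ∀ i, (fun x => g x i - eval x (Q i)) =o[𝓝 0] fun x => ‖x‖ ^ r) (k : ℕ) (i : σ) :
    (fun x => g^[k] x i - eval x ((bind₁ Q)^[k] (X i))) =o[𝓝 0] fun x => ‖x‖ ^ r := by
  induction k generalizing i with
  | zero => simp
  | succ k ih =>
    simpa only [Function.iterate_succ_apply g, Function.iterate_succ_apply' (bind₁ Q)] using
      isLittleO_comp_sub_eval_bind₁ hr (ih i) hQ hg

end Asymptotics

end MvPolynomial

namespace ZhangPaper

open MvPolynomial

def resonanceWeight (l₁ l₂ : ℂ) (i : Fin 2) : Additive ℂ := Additive.ofMul (![l₁, l₂] i)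

theorem weight_resonanceWeight (l₁ l₂ : ℂ) (d : Fin 2 →₀ ℕ) :
    Finsupp.weight (resonanceWeight l₁ l₂) d = Additive.ofMul (l₁ ^ d 0 * l₂ ^ d 1) := by
  simp [Finsupp.weight_apply, Finsupp.sum_fintype, resonanceWeight, ofMul_pow, ofMul_mul]

theorem degree_fin_two (d : Fin 2 →₀ ℕ) : d.degree = d 0 + d 1 := by
  rw [Finsupp.degree_eq_sum, Fin.sum_univ_two]

theorem single_zero_add_single_one (d : Fin 2 →₀ ℕ) :
    Finsupp.single 0 (d 0) + Finsupp.single 1 (d 1) = d := by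
  ext i; fin_cases i <;> simp

theorem single_zero_add_single_one_eq_iff {a b : ℕ} {d : Fin 2 →₀ ℕ} :
    Finsupp.single 0 a + Finsupp.single 1 b = d ↔ (a, b) = (d 0, d 1) := by
  constructor
  · rintro rfl; simp
  · intro h; simp only [Prod.mk.injEq] at h; rw [h.1, h.2, single_zero_add_single_one]

def nonlinearJet (r : ℕ) (c : ℕ → ℕ → ℂ) : MvPolynomial (Fin 2) ℂ :=
  ∑ i ∈ Finset.range (r + 1) ×ˢ Finset.range (r + 1),
    if 2 ≤ i.1 + i.2 ∧ i.1 + i.2 ≤ r then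
      monomial (Finsupp.single 0 i.1 + Finsupp.single 1 i.2) (c i.1 i.2) else 0

theorem eval_nonlinearJet (r : ℕ) (c : ℕ → ℕ → ℂ) (x : Cn 2) :
    eval x (nonlinearJet r c) = ∑ i ∈ Finset.range (r + 1) ×ˢ Finset.range (r + 1),
      if 2 ≤ i.1 + i.2 ∧ i.1 + i.2 ≤ r then c i.1 i.2 * x 0 ^ i.1 * x 1 ^ i.2 else 0 := by
  rw [nonlinearJet, map_sum]
  refine Finset.sum_congr rfl fun i _ => ?_
  split_ifs <;> simp [MvPolynomial.eval_monomial, Finsupp.prod_fintype, mul_assoc]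

theorem coeff_nonlinearJet (r : ℕ) (c : ℕ → ℕ → ℂ) (d : Fin 2 →₀ ℕ) :
    coeff d (nonlinearJet r c) =
      if 2 ≤ d.degree ∧ d.degree ≤ r then c (d 0) (d 1) else 0 := by
  simp only [nonlinearJet, MvPolynomial.coeff_sum, apply_ite (MvPolynomial.coeff d),
    MvPolynomial.coeff_monomial, MvPolynomial.coeff_zero, single_zero_add_single_one_eq_iff]
  simp_rw [Prod.mk.eta, ← ite_and, and_comm (b := _ = _), ite_and, Finset.sum_ite_eq',
    Finset.mem_product, Finset.mem_range, degree_fin_two]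
  split_ifs <;> first | rfl | omega

theorem resonantUpTo_iff {l₁ l₂ target lin : ℂ} {j : Fin 2} {h : Cn 2 → ℂ} {r : ℕ} :
    ResonantUpTo l₁ l₂ target lin j h r ↔
      ∃ p ∈ idealOfVars (Fin 2) ℂ ^ 2,
        IsWeightedHomogeneous (resonanceWeight l₁ l₂) p (Additive.ofMul target) ∧
        (fun x => h x - lin * x j - eval x p) =o[𝓝 0] fun x : Cn 2 => ‖x‖ ^ r := by
  constructor
  · rintro ⟨c, hc, hrem⟩
    refine ⟨nonlinearJet r c, ?_, fun d hd => ?_, by simpa only [eval_nonlinearJet] using hrem⟩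
    · refine (mem_pow_idealOfVars_iff' _ _).2 fun d hd => ?_
      rw [coeff_nonlinearJet, if_neg (by omega)]
    · rw [coeff_nonlinearJet] at hd
      split_ifs at hd with hdeg
      · rw [degree_fin_two] at hdeg
        rw [weight_resonanceWeight, ← hc _ _ hdeg.1 hdeg.2 hd]
      · exact absurd rfl hd
  · rintro ⟨p, hp, hpw, hrem⟩
    set c : ℕ → ℕ → ℂ := fun a b => coeff (Finsupp.single 0 a + Finsupp.single 1 b) p
    refine ⟨c, fun a b _ _ hab => ?_, ?_⟩
    · have := hpw hab
      rw [weight_resonanceWeight] at this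
      simpa using (Additive.ofMul.injective this).symm
    have hhigh : p - nonlinearJet r c ∈ idealOfVars (Fin 2) ℂ ^ (r + 1) := by
      refine (mem_pow_idealOfVars_iff' _ _).2 fun d hd => ?_
      rw [MvPolynomial.coeff_sub, coeff_nonlinearJet]
      split_ifs with hdeg
      · simp [c, single_zero_add_single_one]
      · rw [(mem_pow_idealOfVars_iff' _ _).1 hp d (by omega), sub_zero]
    have hsmall := (isBigO_eval_of_mem_pow_idealOfVars hhigh).trans_isLittleO
      (isLittleO_norm_pow_norm_pow r.lt_succ_self)
    refine (hrem.add hsmall).congr_left fun x => ?_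
    rw [← eval_nonlinearJet, map_sub]
    ring

theorem ResonantUpTo.iterate {r : ℕ} (hr : 0 < r) {l₁ l₂ : ℂ} {g : Cn 2 → Cn 2}
    (hg : ∀ j, ResonantUpTo l₁ l₂ (![l₁, l₂] j) (![l₁, l₂] j) j (fun x => g x j) r)
    (k : ℕ) (j : Fin 2) :
    ResonantUpTo l₁ l₂ (![l₁, l₂] j) (![l₁, l₂] j ^ k) j (fun x => g^[k] x j) r := by
  set l : Fin 2 → ℂ := ![l₁, l₂]
  set w := resonanceWeight l₁ l₂
  choose p hp hpw hrem using fun j => resonantUpTo_iff.1 (hg j)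
  set Q : Fin 2 → MvPolynomial (Fin 2) ℂ :=
    fun j => MvPolynomial.C (l j) * MvPolynomial.X j + p j
  have hXw i : IsWeightedHomogeneous w (MvPolynomial.X i) (w i) := isWeightedHomogeneous_X ℂ w i
  have hQw i : IsWeightedHomogeneous w (Q i) (w i) := ((hXw i).C_mul _).add (hpw i)
  have hQlin i : Q i - MvPolynomial.C (l i) * MvPolynomial.X i ∈ idealOfVars (Fin 2) ℂ ^ 2 := by
    simpa [Q] using hp i
  have hQrem i : (fun x => g x i - eval x (Q i)) =o[𝓝 0] fun x : Cn 2 => ‖x‖ ^ r := by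
    simpa only [Q, map_add, map_mul, MvPolynomial.eval_C, MvPolynomial.eval_X,
      sub_add_eq_sub_sub] using hrem i
  refine resonantUpTo_iff.2 ⟨_, iterate_bind₁_X_sub_mem_pow_idealOfVars hQlin k j,
    (IsWeightedHomogeneous.iterate_bind₁ hQw (hXw j) k).sub ((hXw j).C_mul _), ?_⟩
  simpa only [map_sub, map_mul, MvPolynomial.eval_C, MvPolynomial.eval_X,
    sub_sub_sub_cancel_right] using isLittleO_iterate_sub_eval_iterate_bind₁ hr
      (fun i => mem_idealOfVars_of_sub_C_mul_X_mem two_ne_zero (hQlin i)) hQrem k j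

theorem iterate_resonant_normal_form_general (r : ℕ) (hr : 0 < r) (l₁ l₂ : ℂ)
    (g : Cn 2 → Cn 2)
    (h₁ : ResonantUpTo l₁ l₂ l₁ l₁ 0 (fun x => g x 0) r)
    (h₂ : ResonantUpTo l₁ l₂ l₂ l₂ 1 (fun x => g x 1) r) :
    ∀ k : ℕ, 0 < k →
      ResonantUpTo l₁ l₂ l₁ (l₁ ^ k) 0 (fun x => g^[k] x 0) r ∧
      ResonantUpTo l₁ l₂ l₂ (l₂ ^ k) 1 (fun x => g^[k] x 1) r := by
  intro k _
  have hg : ∀ j, ResonantUpTo l₁ l₂ (![l₁, l₂] j) (![l₁, l₂] j) j (fun x => g x j) r :=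
    Fin.forall_fin_two.2 ⟨h₁, h₂⟩
  exact ⟨ResonantUpTo.iterate hr hg k 0, ResonantUpTo.iterate hr hg k 1⟩

/-- If `g` with `Dg(0) = diag(λ₁, λ₂)` is in resonant normal form up to degree `r`
in each component, then so is every iterate `g^k`, whose linear part is
`diag(λ₁^k, λ₂^k)` and whose coefficients up to degree `r` obey the same resonance
conditions `λ_j = λ₁^{i₁} λ₂^{i₂}`. -/
theorem iterate_resonant_normal_form (r : ℕ) (hr : 0 < r) (l₁ l₂ : ℂ)
    (g : Cn 2 → Cn 2) (hg : IsGerm g)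
    (hD : ∀ v : Cn 2, fderiv ℂ g 0 v = ![l₁ * v 0, l₂ * v 1])
    (h₁ : ResonantUpTo l₁ l₂ l₁ l₁ 0 (fun x => g x 0) r)
    (h₂ : ResonantUpTo l₁ l₂ l₂ l₂ 1 (fun x => g x 1) r) :
    ∀ k : ℕ, 0 < k →
      ResonantUpTo l₁ l₂ l₁ (l₁ ^ k) 0 (fun x => g^[k] x 0) r ∧
      ResonantUpTo l₁ l₂ l₂ (l₂ ^ k) 1 (fun x => g^[k] x 1) r :=
  iterate_resonant_normal_form_general r hr l₁ l₂ g h₁ h₂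

end ZhangPaper
end
end
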